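/- arXiv:0912.0551 — 5 statements merged into one kernel-verified Lean document; each statement's English description precedes it below -/
import Mathlib

section
/- (Foster's criterion.) Let (W_n) be a time-homogeneous Markov chain with Markov transition kernel K on a measurable space (W, B_W). Let L : W → [0,∞) be measurable, let L̂ ≥ 0, and set V := {w ∈ W : L(w) ≤ L̂}. Assume (i) sup_{w∈V} E[L(W_1) | W_0 = w] < ∞, and (ii) there exists ε > 0 such that E[L(W_1) | W_0 = w] − L(w) ≤ −ε for every w ∈ W \ V. Then V is positive recurrent: τ_w(V) := min{n ≥ 1 : W_n ∈ V} is almost surely finite for every initial state w ∈ W, and sup_{w∈V} E[τ_w(V)] < ∞. -/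
open MeasureTheory ProbabilityTheory Filter Set
open scoped ENNReal

/-- The `n`-fold composition of a kernel with itself (`n = 0` gives the identity kernel). -/
noncomputable def kernelPow {W : Type*} [MeasurableSpace W] (Q : ProbabilityTheory.Kernel W W) :
    ℕ → ProbabilityTheory.Kernel W W
  | 0 => ProbabilityTheory.Kernel.id
  | n + 1 => Q ∘ₖ kernelPow Q n

/-- For a Markov chain with transition kernel `K` started at `w`, and a measurable set `V`,
the probability that the hitting time `τ_w(V) = min {n ≥ 1 : W_n ∈ V}` exceeds `n` equals
`Q^n(w, univ)` where `Q` is the restriction of `K` to the complement of `V` (the taboo kernel). -/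
noncomputable def probHitGT {W : Type*} [MeasurableSpace W] (K : ProbabilityTheory.Kernel W W)
    {V : Set W} (hV : MeasurableSet V) (w : W) (n : ℕ) : ℝ≥0∞ :=
  kernelPow (K.restrict hV.compl) n w Set.univ

/-- A measurable set `V` is positive recurrent for the kernel `K` if the hitting time
`τ_w(V)` is a.s. finite for every starting point `w` (i.e. `P_w(τ_w(V) > n) → 0`), and
`sup_{w ∈ V} E[τ_w(V)] < ∞`, where `E[τ_w(V)] = ∑_{n ≥ 0} P_w(τ_w(V) > n)`. -/
def PositiveRecurrent {W : Type*} [MeasurableSpace W] (K : ProbabilityTheory.Kernel W W)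
    {V : Set W} (hV : MeasurableSet V) : Prop :=
  (∀ w : W, Tendsto (fun n => probHitGT K hV w n) atTop (nhds 0)) ∧
    (⨆ w ∈ V, ∑' n : ℕ, probHitGT K hV w n) < ⊤

/-! Let `Q` be the taboo kernel, i.e. `K` killed on entering `V`, so that `P_w(τ > n + 1)` is the
mass of `Qⁿ⁺¹ w`, a measure living off `V`. There `L` drops by at least `ε` per step in
expectation, so `ε ∑ₖ Qᵏ⁺² w univ` telescopes to at most `∫ L d(Q w) ≤ ∫ L d(K w)`. This bounds
`E[τ_w(V)]` by `2 + (∫ L d(K w)) / ε`, which is finite everywhere and uniformly bounded on `V`. -/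

theorem ENNReal.tsum_le_of_add_le_succ {a b : ℕ → ℝ≥0∞} (h : ∀ n, a n + b (n + 1) ≤ b n) :
    ∑' n, a n ≤ b 0 := by
  have partial_le : ∀ N, ∑ n ∈ Finset.range N, a n + b N ≤ b 0 := by
    intro N
    induction N with
    | zero => simp
    | succ N ih =>
      calc ∑ n ∈ Finset.range (N + 1), a n + b (N + 1)
          = ∑ n ∈ Finset.range N, a n + (a N + b (N + 1)) := by
            rw [Finset.sum_range_succ, add_assoc]
        _ ≤ ∑ n ∈ Finset.range N, a n + b N := by gcongr; exact h N
        _ ≤ b 0 := ih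
  exact ENNReal.tsum_le_of_sum_range_le fun N => le_self_add.trans (partial_le N)

namespace kernelPow

variable {W : Type*} [MeasurableSpace W] (Q : Kernel W W)

theorem succ (n : ℕ) : kernelPow Q (n + 1) = Q ∘ₖ kernelPow Q n := rfl

@[simp]
theorem zero_apply (w : W) : kernelPow Q 0 w = Measure.dirac w := Kernel.id_apply w

@[simp]
theorem one : kernelPow Q 1 = Q := Kernel.comp_id Q

variable {Q}

theorem succ_apply_eq_zero {s : Set W} (hs : MeasurableSet s) (hQs : ∀ z, Q z s = 0)
    (n : ℕ) (w : W) : kernelPow Q (n + 1) w s = 0 := by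
  simp [succ, Kernel.comp_apply' _ _ _ hs, hQs]

/-- Starts at time `1`: `Q⁰ w = δ_w` may charge `V`, where no drift is assumed. -/
theorem lintegral_add_mul_univ_le {V : Set W} (hV : MeasurableSet V) (hQV : ∀ z, Q z V = 0)
    {f : W → ℝ≥0∞} (hf : Measurable f) {c : ℝ≥0∞}
    (hdrift : ∀ z ∉ V, ∫⁻ x, f x ∂Q z + c * Q z univ ≤ f z) (n : ℕ) (w : W) :
    ∫⁻ x, f x ∂kernelPow Q (n + 2) w + c * kernelPow Q (n + 2) w univ ≤
      ∫⁻ x, f x ∂kernelPow Q (n + 1) w := by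
  have off_V : ∀ᵐ z ∂kernelPow Q (n + 1) w, z ∉ V :=
    measure_eq_zero_iff_ae_notMem.mp (succ_apply_eq_zero hV hQV n w)
  rw [succ Q (n + 1), Kernel.lintegral_comp _ _ _ hf, Kernel.comp_apply' _ _ _ .univ,
    ← lintegral_const_mul _ (Q.measurable_coe .univ),
    ← lintegral_add_left (hf.lintegral_kernel (κ := Q))]
  exact lintegral_mono_ae (off_V.mono hdrift)

theorem mul_tsum_univ_le {V : Set W} (hV : MeasurableSet V) (hQV : ∀ z, Q z V = 0)
    {f : W → ℝ≥0∞} (hf : Measurable f) {c : ℝ≥0∞}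
    (hdrift : ∀ z ∉ V, ∫⁻ x, f x ∂Q z + c * Q z univ ≤ f z) (w : W) :
    c * ∑' n, kernelPow Q (n + 2) w univ ≤ ∫⁻ x, f x ∂Q w := by
  rw [← ENNReal.tsum_mul_left]
  refine (ENNReal.tsum_le_of_add_le_succ (b := fun n => ∫⁻ x, f x ∂kernelPow Q (n + 1) w)
    fun n => ?_).trans_eq (by simp)
  rw [add_comm]
  exact lintegral_add_mul_univ_le hV hQV hf hdrift n w

end kernelPow

section Taboo

variable {W : Type*} [MeasurableSpace W] {K : Kernel W W} [IsMarkovKernel K]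

theorem tsum_probHitGT_le {V : Set W} (hV : MeasurableSet V) {f : W → ℝ≥0∞} (hf : Measurable f)
    {c : ℝ≥0∞} (hc : c ≠ 0) (hc_top : c ≠ ∞) (hdrift : ∀ z ∉ V, ∫⁻ x, f x ∂K z + c ≤ f z) (w : W) :
    ∑' n, probHitGT K hV w n ≤ 2 + (∫⁻ x, f x ∂K w) / c := by
  set Q := K.restrict hV.compl
  have hQV : ∀ z, Q z V = 0 := fun z => by
    simp [Q, Kernel.restrict_apply' _ _ _ hV]
  have hQ_univ : ∀ z, Q z univ ≤ 1 := fun z => by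
    simpa [Q, Kernel.restrict_apply] using prob_le_one
  have hQ_lintegral : ∀ z, ∫⁻ x, f x ∂Q z ≤ ∫⁻ x, f x ∂K z := fun z => by
    simpa [Q, Kernel.lintegral_restrict] using setLIntegral_le_lintegral _ _
  have hQ_drift : ∀ z ∉ V, ∫⁻ x, f x ∂Q z + c * Q z univ ≤ f z := fun z hz =>
    calc ∫⁻ x, f x ∂Q z + c * Q z univ ≤ ∫⁻ x, f x ∂K z + c * 1 :=
          add_le_add (hQ_lintegral z) (by gcongr; exact hQ_univ z)
      _ ≤ f z := by simpa using hdrift z hz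
  have tail_le : ∑' n, probHitGT K hV w (n + 2) ≤ (∫⁻ x, f x ∂K w) / c := by
    rw [ENNReal.le_div_iff_mul_le (.inl hc) (.inl hc_top), mul_comm]
    exact (kernelPow.mul_tsum_univ_le hV hQV hf hQ_drift w).trans (hQ_lintegral w)
  calc ∑' n, probHitGT K hV w n
      = probHitGT K hV w 0 + (probHitGT K hV w 1 + ∑' n, probHitGT K hV w (n + 2)) := by
        rw [tsum_eq_zero_add' ENNReal.summable, tsum_eq_zero_add' ENNReal.summable]
    _ ≤ 1 + (1 + (∫⁻ x, f x ∂K w) / c) := by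
        gcongr
        · simp [probHitGT]
        · simpa [probHitGT] using hQ_univ w
    _ = 2 + (∫⁻ x, f x ∂K w) / c := by ring

end Taboo

theorem foster_criterion_general
    {W : Type*} [MeasurableSpace W] (K : ProbabilityTheory.Kernel W W) [IsMarkovKernel K]
    (L : W → ℝ) (hL : Measurable L)
    (V : Set W)
    (hV : MeasurableSet V)
    (hi : (⨆ w ∈ V, ∫⁻ z, ENNReal.ofReal (L z) ∂(K w)) < ⊤)
    (hii : ∃ ε : ℝ, 0 < ε ∧ ∀ w ∉ V,
      (∫⁻ z, ENNReal.ofReal (L z) ∂(K w)) + ENNReal.ofReal ε ≤ ENNReal.ofReal (L w)) :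
    PositiveRecurrent K hV := by
  obtain ⟨ε, hε, hdrift⟩ := hii
  have hε0 : ENNReal.ofReal ε ≠ 0 := by simpa using hε
  have hsum := tsum_probHitGT_le hV hL.ennreal_ofReal hε0 ENNReal.ofReal_ne_top hdrift
  have bound_lt_top {B : ℝ≥0∞} (hB : B < ⊤) : 2 + B / ENNReal.ofReal ε < ⊤ :=
    ENNReal.add_lt_top.mpr ⟨by norm_num, ENNReal.div_lt_top hB.ne hε0⟩
  have hK_lintegral_lt_top (w : W) : ∫⁻ z, ENNReal.ofReal (L z) ∂K w < ⊤ := by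
    by_cases hw : w ∈ V
    · exact (le_biSup (fun w => ∫⁻ z, ENNReal.ofReal (L z) ∂K w) hw).trans_lt hi
    · exact (le_self_add.trans (hdrift w hw)).trans_lt ENNReal.ofReal_lt_top
  refine ⟨fun w => ENNReal.tendsto_atTop_zero_of_tsum_ne_top ?_, ?_⟩
  · exact ((hsum w).trans_lt (bound_lt_top (hK_lintegral_lt_top w))).ne
  · refine lt_of_le_of_lt (iSup₂_le fun w hw => (hsum w).trans ?_) (bound_lt_top hi)
    gcongr
    exact le_biSup (fun w => ∫⁻ z, ENNReal.ofReal (L z) ∂K w) hw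

/-- **Foster's criterion.** Let `(W_n)` be a time-homogeneous Markov chain with Markov
transition kernel `K` on a measurable space `W`. Let `L : W → [0,∞)` be measurable, `L̂ ≥ 0`,
and `V = {w : L w ≤ L̂}`. If (i) `sup_{w ∈ V} E[L(W_1) | W_0 = w] < ∞` and (ii) there is
`ε > 0` with `E[L(W_1) | W_0 = w] ≤ L(w) - ε` for every `w ∉ V`, then `V` is positive
recurrent: `τ_w(V)` is a.s. finite for every `w`, and `sup_{w ∈ V} E[τ_w(V)] < ∞`. -/
theorem foster_criterion
    {W : Type*} [MeasurableSpace W] (K : ProbabilityTheory.Kernel W W) [IsMarkovKernel K]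
    (L : W → ℝ) (hL : Measurable L) (hLpos : ∀ w, 0 ≤ L w)
    (Lhat : ℝ) (hLhat : 0 ≤ Lhat)
    (V : Set W) (hVdef : V = {w : W | L w ≤ Lhat})
    (hV : MeasurableSet V)
    (hi : (⨆ w ∈ V, ∫⁻ z, ENNReal.ofReal (L z) ∂(K w)) < ⊤)
    (hii : ∃ ε : ℝ, 0 < ε ∧ ∀ w ∉ V,
      (∫⁻ z, ENNReal.ofReal (L z) ∂(K w)) + ENNReal.ofReal ε ≤ ENNReal.ofReal (L w)) :
    PositiveRecurrent K hV :=
  foster_criterion_general K L hL V hV hi hii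
end

section
/- If x1 < x2 then x1 + c·T^{(1,x1)} ≤_st x2 + c·T^{(1,x2)}; explicitly, for every u ∈ ℝ, G1(x1, max(0, (u−x1)/c)) ≤ G1(x2, max(0, (u−x2)/c)). -/
open MeasureTheory Filter Set

/-- Survival function of `T^{(1,x)}`: `G1(x,t) = exp(−∫_0^t φ(x+cv) dv)`. -/
noncomputable def G1 (c : ℝ) (φ : ℝ → ℝ) (x t : ℝ) : ℝ :=
  Real.exp (-∫ v in (0:ℝ)..t, φ (x + c * v))

/-!
Substituting `y = x + c v` turns `G1(x, max 0 ((u - x)/c))` into `exp (-(1/c) ∫_{(x, u]} φ)`.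
For `x1 < x2` the interval `(x2, u]` lies inside `(x1, u]`, so since `φ ≥ 0` the exponent for
`x2` is the larger one.
-/

theorem Ioc_max_self_right {α : Type*} [LinearOrder α] (a b : α) : Ioc a (max a b) = Ioc a b := by
  rcases le_total a b with h | h
  · rw [max_eq_right h]
  · rw [max_eq_left h, Ioc_self, Ioc_eq_empty h.not_gt]

theorem G1_max_div_eq_exp_setIntegral_Ioc {c : ℝ} (hc : 0 < c) (φ : ℝ → ℝ) (x u : ℝ) :
    G1 c φ x (max 0 ((u - x) / c)) = Real.exp (-(c⁻¹ * ∫ y in Ioc x u, φ y)) := by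
  have hend : x + c * max 0 ((u - x) / c) = max x u := by
    rw [mul_max_of_nonneg _ _ hc.le, mul_div_cancel₀ _ hc.ne', mul_zero, add_max, add_zero,
      add_sub_cancel]
  rw [G1, intervalIntegral.integral_comp_add_mul _ hc.ne', mul_zero, add_zero, hend,
    intervalIntegral.integral_of_le (le_max_left x u), Ioc_max_self_right, smul_eq_mul]

theorem shifted_time_stochastic_monotone_general
    (c : ℝ) (hc : 0 < c)
    (φ : ℝ → ℝ) (hφmono : Monotone φ) (hφnonneg : ∀ x, 0 ≤ φ x)
    (x1 x2 : ℝ) (hx : x1 < x2) :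
    ∀ u : ℝ, G1 c φ x1 (max 0 ((u - x1) / c)) ≤ G1 c φ x2 (max 0 ((u - x2) / c)) := by
  intro u
  have hint : IntegrableOn φ (Ioc x1 u) :=
    (hφmono.monotoneOn _).integrableOn_isCompact isCompact_Icc |>.mono_set Ioc_subset_Icc_self
  have hsub : ∫ y in Ioc x2 u, φ y ≤ ∫ y in Ioc x1 u, φ y :=
    setIntegral_mono_set hint (Eventually.of_forall hφnonneg)
      (Eventually.of_forall (Ioc_subset_Ioc_left hx.le))
  rw [G1_max_div_eq_exp_setIntegral_Ioc hc, G1_max_div_eq_exp_setIntegral_Ioc hc,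
    Real.exp_le_exp, neg_le_neg_iff]
  exact mul_le_mul_of_nonneg_left hsub (inv_nonneg.2 hc.le)

/-- If `x1 < x2` then `x1 + c T^{(1,x1)} ≤_st x2 + c T^{(1,x2)}`; explicitly, for every
`u ∈ ℝ`, `G1(x1, max 0 ((u−x1)/c)) ≤ G1(x2, max 0 ((u−x2)/c))`, where
`P(x_i + c T^{(1,x_i)} > u) = G1(x_i, max 0 ((u−x_i)/c))`. -/
theorem shifted_time_stochastic_monotone
    (c α : ℝ) (hc : 0 < c) (hα : 0 < α)
    (φ : ℝ → ℝ) (hφmono : Monotone φ) (hφnonneg : ∀ x, 0 ≤ φ x)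
    (hφbot : Tendsto φ atBot (nhds 0)) (hφtop : Tendsto φ atTop atTop)
    (x1 x2 : ℝ) (hx : x1 < x2) :
    ∀ u : ℝ, G1 c φ x1 (max 0 ((u - x1) / c)) ≤ G1 c φ x2 (max 0 ((u - x2) / c)) :=
  shifted_time_stochastic_monotone_general c hc φ hφmono hφnonneg x1 x2 hx
end

section
/- sup_{y ≥ 0} S(x,y) → 0 as x → ∞; that is, sup_{y ≥ 0} E[T_{x,y}] tends to 0 as x → ∞. -/
open MeasureTheory Filter Set
open scoped ENNReal

/-- Survival function of `T^{(2,y)}`: `G2(y,t) = exp(−(y/α)(1−e^{−αt}))`. -/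
noncomputable def G2 (α : ℝ) (y t : ℝ) : ℝ :=
  Real.exp (-(y / α) * (1 - Real.exp (-α * t)))

/-- `S(x,y) = ∫_0^∞ G1(x,t) G2(y,t) dt`, the expectation of
`T_{x,y} = min (T^{(1,x)}, T^{(2,y)})` for independent `T^{(1,x)}`, `T^{(2,y)}`. -/
noncomputable def S (c α : ℝ) (φ : ℝ → ℝ) (x y : ℝ) : ℝ≥0∞ :=
  ∫⁻ t in Set.Ioi (0:ℝ), ENNReal.ofReal (G1 c φ x t * G2 α y t)

/-!
Since `φ` is nondecreasing and `c ≥ 0`, the hazard rate `φ (x + c t)` of `T^{(1,x)}` never drops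
below `φ x`, so `G1 x t ≤ exp (-φ x * t)`; together with `G2 ≤ 1` this gives
`S x y ≤ ∫_0^∞ exp (-φ x * t) dt = 1 / φ x` uniformly in `y ≥ 0`, and `1 / φ x → 0`.
-/

theorem G2_le_one {α y t : ℝ} (hα : 0 < α) (hy : 0 ≤ y) (ht : 0 ≤ t) : G2 α y t ≤ 1 := by
  rw [G2, Real.exp_le_one_iff, neg_mul, neg_nonpos]
  refine mul_nonneg (div_nonneg hy hα.le) (sub_nonneg.mpr ?_)
  exact Real.exp_le_one_iff.mpr (by nlinarith)

theorem G1_le_exp_neg_mul {c : ℝ} {φ : ℝ → ℝ} (hc : 0 ≤ c) (hφ : Monotone φ) (x : ℝ) {t : ℝ}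
    (ht : 0 ≤ t) : G1 c φ x t ≤ Real.exp (-φ x * t) := by
  have hφ_comp : Monotone fun v => φ (x + c * v) :=
    hφ.comp fun _ _ hab => add_le_add_right (mul_le_mul_of_nonneg_left hab hc) x
  have hint : φ x * t ≤ ∫ v in (0:ℝ)..t, φ (x + c * v) := by
    calc φ x * t = ∫ _ in (0:ℝ)..t, φ x := by simp [mul_comm]
      _ ≤ ∫ v in (0:ℝ)..t, φ (x + c * v) :=
        intervalIntegral.integral_mono_on ht intervalIntegrable_const
          hφ_comp.intervalIntegrable fun v hv => hφ (le_add_of_nonneg_right (mul_nonneg hc hv.1))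
  rw [G1, neg_mul]
  exact Real.exp_le_exp.mpr (neg_le_neg hint)

theorem lintegral_exp_neg_mul_Ioi {a : ℝ} (ha : 0 < a) :
    ∫⁻ t in Ioi (0:ℝ), ENNReal.ofReal (Real.exp (-a * t)) = ENNReal.ofReal a⁻¹ := by
  rw [← ofReal_integral_eq_lintegral_ofReal (exp_neg_integrableOn_Ioi 0 ha)
    (Eventually.of_forall fun _ => Real.exp_nonneg _), integral_exp_mul_Ioi (neg_neg_of_pos ha)]
  simp

theorem S_le_inv {c α : ℝ} {φ : ℝ → ℝ} (hc : 0 ≤ c) (hα : 0 < α) (hφ : Monotone φ) {x y : ℝ}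
    (hy : 0 ≤ y) (hφx : 0 < φ x) : S c α φ x y ≤ ENNReal.ofReal (φ x)⁻¹ := by
  rw [S, ← lintegral_exp_neg_mul_Ioi hφx]
  refine setLIntegral_mono' measurableSet_Ioi fun t ht => ENNReal.ofReal_le_ofReal ?_
  have ht : 0 ≤ t := le_of_lt ht
  exact (mul_le_of_le_one_right (Real.exp_nonneg _) (G2_le_one hα hy ht)).trans
    (G1_le_exp_neg_mul hc hφ x ht)

theorem sup_expectation_tendsto_zero_of_x_general
    (c α : ℝ) (hc : 0 < c) (hα : 0 < α)
    (φ : ℝ → ℝ) (hφmono : Monotone φ)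
    (hφtop : Tendsto φ atTop atTop) :
    Tendsto (fun x : ℝ => ⨆ y : Set.Ici (0:ℝ), S c α φ x y) atTop (nhds 0) := by
  have h_inv : Tendsto (fun x => ENNReal.ofReal (φ x)⁻¹) atTop (nhds 0) := by
    simpa using ENNReal.tendsto_ofReal hφtop.inv_tendsto_atTop
  refine tendsto_of_tendsto_of_tendsto_of_le_of_le' tendsto_const_nhds h_inv
    (Eventually.of_forall fun _ => zero_le) ?_
  filter_upwards [hφtop.eventually_gt_atTop 0] with x hφx
  exact iSup_le fun y => S_le_inv hc.le hα hφmono y.2 hφx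

/-- `sup_{y ≥ 0} S(x,y) → 0` as `x → ∞`; that is, `sup_{y ≥ 0} E[T_{x,y}]` tends to `0`
as `x → ∞`. -/
theorem sup_expectation_tendsto_zero_of_x
    (c α : ℝ) (hc : 0 < c) (hα : 0 < α)
    (φ : ℝ → ℝ) (hφmono : Monotone φ) (hφnonneg : ∀ x, 0 ≤ φ x)
    (hφbot : Tendsto φ atBot (nhds 0)) (hφtop : Tendsto φ atTop atTop) :
    Tendsto (fun x : ℝ => ⨆ y : Set.Ici (0:ℝ), S c α φ x y) atTop (nhds 0) :=
  sup_expectation_tendsto_zero_of_x_general c α hc hα φ hφmono hφtop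
end

section
/- As y → ∞, y·E[e^{−α T^{(2,y)}} − 1] → −α; that is, y·∫_{[0,∞]} (e^{−αs} − 1) dμ^{(2)}_y(s) converges to −α as y → ∞. -/
open MeasureTheory Filter Set
open scoped ENNReal

/-!
Under `μ_y` the random variable `1 - e^{-αT}` is an exponential variable of rate `y/α`
truncated at `1`: `P(1 - e^{-αT} > t) = P(T > -log(1-t)/α) = e^{-(y/α)t}` for `t ∈ [0,1)`.
The layer-cake formula then gives `E[1 - e^{-αT}] = (α/y)(1 - e^{-y/α})`, so
`y · E[e^{-αT} - 1] = -α(1 - e^{-y/α}) → -α`.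
-/

lemma integral_eq_integral_Ioo_measureReal_lt {X : Type*} [MeasurableSpace X] {μ : Measure X}
    [IsFiniteMeasure μ] {f : X → ℝ} (hf : AEStronglyMeasurable f μ) (h0 : 0 ≤ᵐ[μ] f)
    (h1 : ∀ᵐ x ∂μ, f x ≤ 1) :
    ∫ x, f x ∂μ = ∫ t in Ioo 0 1, μ.real {x | t < f x} := by
  have hint : Integrable f μ := by
    refine Integrable.of_bound hf 1 ?_
    filter_upwards [h0, h1] with x hx0 hx1
    rwa [Real.norm_of_nonneg hx0]
  rw [hint.integral_eq_integral_meas_lt h0]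
  refine setIntegral_eq_of_subset_of_forall_sdiff_eq_zero measurableSet_Ioi Ioo_subset_Ioi_self ?_
  rintro t ⟨ht0, ht⟩
  have ht1 : 1 ≤ t := not_lt.1 fun h => ht ⟨ht0, h⟩
  have hnull : μ {x | t < f x} = 0 := by
    rw [measure_eq_zero_iff_ae_notMem]
    filter_upwards [h1] with x hx
    simpa using hx.trans ht1
  simp [measureReal_def, hnull]

lemma integral_Ioo_zero_one_exp_mul {c : ℝ} (hc : c ≠ 0) :
    ∫ t in Ioo 0 1, Real.exp (c * t) = (Real.exp c - 1) / c := by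
  rw [← integral_Ioc_eq_integral_Ioo, ← intervalIntegral.integral_of_le zero_le_one,
    intervalIntegral.integral_comp_mul_left (fun t => Real.exp t) hc, integral_exp]
  simp [div_eq_inv_mul]

noncomputable def expNegMul (α : ℝ) (s : ℝ≥0∞) : ℝ :=
  if s = ∞ then 0 else Real.exp (-α * s.toReal)

lemma measurable_expNegMul (α : ℝ) : Measurable (expNegMul α) :=
  Measurable.ite (measurableSet_singleton ∞) measurable_const
    (Real.measurable_exp.comp (ENNReal.measurable_toReal.const_mul (-α)))

lemma expNegMul_nonneg (α : ℝ) (s : ℝ≥0∞) : 0 ≤ expNegMul α s := by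
  unfold expNegMul
  split_ifs <;> positivity

lemma expNegMul_le_one {α : ℝ} (hα : 0 ≤ α) (s : ℝ≥0∞) : expNegMul α s ≤ 1 := by
  unfold expNegMul
  split_ifs
  · exact zero_le_one
  · exact Real.exp_le_one_iff.2 (mul_nonpos_of_nonpos_of_nonneg (neg_nonpos.2 hα) s.toReal_nonneg)

lemma expNegMul_lt_exp_iff {α c : ℝ} (hα : 0 < α) (hc : 0 ≤ c) (s : ℝ≥0∞) :
    expNegMul α s < Real.exp (-α * c) ↔ ENNReal.ofReal c < s := by
  rcases eq_or_ne s ∞ with rfl | hs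
  · simp [expNegMul, Real.exp_pos]
  · rw [expNegMul, if_neg hs, Real.exp_lt_exp, mul_lt_mul_left_of_neg (neg_neg_of_pos hα),
      ENNReal.ofReal_lt_iff_lt_toReal hc hs]

section survival

variable {α y : ℝ} {μ : Measure ℝ≥0∞}

lemma measureReal_lt_one_sub_expNegMul (hα : 0 < α)
    (hsurv : ∀ t : ℝ, 0 ≤ t →
      μ (Ioi (ENNReal.ofReal t)) =
        ENNReal.ofReal (Real.exp (-(y / α) * (1 - Real.exp (-α * t)))))
    {t : ℝ} (ht₀ : 0 ≤ t) (ht₁ : t < 1) :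
    μ.real {s | t < 1 - expNegMul α s} = Real.exp (-(y / α) * t) := by
  set c := -Real.log (1 - t) / α
  have hc : 0 ≤ c := div_nonneg (neg_nonneg.2 (Real.log_nonpos (by linarith) (by linarith))) hα.le
  have hexp : Real.exp (-α * c) = 1 - t := by
    rw [show -α * c = Real.log (1 - t) by simp only [c]; field_simp, Real.exp_log (by linarith)]
  have hset : {s | t < 1 - expNegMul α s} = Ioi (ENNReal.ofReal c) := by
    ext s
    show t < 1 - expNegMul α s ↔ ENNReal.ofReal c < s
    rw [← expNegMul_lt_exp_iff hα hc, hexp]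
    exact lt_sub_comm
  rw [measureReal_def, hset, hsurv c hc, hexp, sub_sub_cancel,
    ENNReal.toReal_ofReal (Real.exp_pos _).le]

lemma integral_expNegMul_sub_one [IsFiniteMeasure μ] (hα : 0 < α) (hy : y ≠ 0)
    (hsurv : ∀ t : ℝ, 0 ≤ t →
      μ (Ioi (ENNReal.ofReal t)) =
        ENNReal.ofReal (Real.exp (-(y / α) * (1 - Real.exp (-α * t))))) :
    ∫ s, (expNegMul α s - 1) ∂μ = -(α / y) * (1 - Real.exp (-(y / α))) := by
  have hlayer := integral_eq_integral_Ioo_measureReal_lt (μ := μ) (f := fun s => 1 - expNegMul α s)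
    (measurable_const.sub (measurable_expNegMul α)).aestronglyMeasurable
    (ae_of_all _ fun s => sub_nonneg.2 (expNegMul_le_one hα.le s))
    (ae_of_all _ fun s => sub_le_self _ (expNegMul_nonneg α s))
  rw [setIntegral_congr_fun measurableSet_Ioo fun t ht =>
      measureReal_lt_one_sub_expNegMul hα hsurv ht.1.le ht.2,
    integral_Ioo_zero_one_exp_mul (by simp [hy, hα.ne'])] at hlayer
  calc ∫ s, (expNegMul α s - 1) ∂μ = -∫ s, (1 - expNegMul α s) ∂μ := by
        rw [← integral_neg]; simp only [neg_sub]
    _ = -(α / y) * (1 - Real.exp (-(y / α))) := by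
        rw [hlayer]; field_simp; ring

end survival

/-- As `y → ∞`, `y · E[e^{−α T^{(2,y)}} − 1] → −α`, where `T^{(2,y)}` is the `[0,∞]`-valued
random time with law `μ y` determined by `P(T^{(2,y)} > t) = exp(−(y/α)(1−e^{−αt}))` for
`t ≥ 0` (so `T^{(2,y)} = ∞` with probability `e^{−y/α}`), with the convention
`e^{−α·∞} := 0`. -/
theorem y_mul_expectation_exp_sub_one_tendsto
    (α : ℝ) (hα : 0 < α)
    (μ : ℝ → Measure ℝ≥0∞)
    (hprob : ∀ y : ℝ, 0 < y → IsProbabilityMeasure (μ y))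
    (hsurv : ∀ y : ℝ, 0 < y → ∀ t : ℝ, 0 ≤ t →
      μ y (Set.Ioi (ENNReal.ofReal t)) =
        ENNReal.ofReal (Real.exp (-(y / α) * (1 - Real.exp (-α * t))))) :
    Tendsto
      (fun y : ℝ =>
        y * ∫ s, ((if s = ∞ then 0 else Real.exp (-α * s.toReal)) - 1) ∂(μ y))
      atTop (nhds (-α)) := by
  have hlim : Tendsto (fun y : ℝ => -α * (1 - Real.exp (-(y / α)))) atTop (nhds (-α)) := by
    have hexp := Real.tendsto_exp_neg_atTop_nhds_zero.comp (tendsto_id.atTop_div_const hα)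
    simpa using ((tendsto_const_nhds (x := (1 : ℝ))).sub hexp).const_mul (-α)
  refine hlim.congr' ?_
  filter_upwards [eventually_gt_atTop 0] with y hy
  have := hprob y hy
  change _ = y * ∫ s, (expNegMul α s - 1) ∂(μ y)
  rw [integral_expNegMul_sub_one hα hy.ne' (hsurv y hy)]
  field_simp
end

section
/- There exists a constant C > 0 such that S(x,y) ≤ C(|x| + 1) for all x ≤ 0 and all y ≥ 0; consequently, for every x1 ∈ ℝ, sup_{x > x1, y ≥ 0} S(x,y) < ∞. -/
open MeasureTheory Filter Set
open scoped ENNReal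

lemma S_key_bound (c α : ℝ) (hc : 0 < c) (hα : 0 < α)
    (φ : ℝ → ℝ) (hφmono : Monotone φ) (hφnonneg : ∀ x, 0 ≤ φ x)
    (b : ℝ) (hb : 1 ≤ φ b) (x y : ℝ) (hy : 0 ≤ y) :
    S c α φ x y ≤ ENNReal.ofReal (max 0 ((b - x) / c) + 1) := by
  set t0 : ℝ := max 0 ((b - x) / c) with ht0
  have ht0nn : 0 ≤ t0 := le_max_left _ _
  have hG2le : ∀ t : ℝ, 0 ≤ t → G2 α y t ≤ 1 := by
    intro t ht
    rw [G2, Real.exp_le_one_iff]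
    have h1 : Real.exp (-α * t) ≤ 1 := by
      rw [Real.exp_le_one_iff]
      nlinarith
    have h2 : 0 ≤ y / α := div_nonneg hy hα.le
    nlinarith
  have hG2pos : ∀ t : ℝ, 0 < G2 α y t := fun t => Real.exp_pos _
  have hG1pos : ∀ t : ℝ, 0 < G1 c φ x t := fun t => Real.exp_pos _
  have hint : ∀ a d : ℝ, IntervalIntegrable (fun v => φ (x + c * v)) volume a d := by
    intro a d
    exact (hφmono.comp (fun u v huv => by
      have := mul_le_mul_of_nonneg_left huv hc.le
      dsimp only; linarith : Monotone fun v : ℝ => x + c * v)).intervalIntegrable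
  -- G1 bound on [t0, ∞)
  have hG1le : ∀ t : ℝ, t0 ≤ t → G1 c φ x t ≤ Real.exp (t0 - t) := by
    intro t ht
    rw [G1, Real.exp_le_exp]
    have hsplit : (∫ v in (0:ℝ)..t, φ (x + c * v)) =
        (∫ v in (0:ℝ)..t0, φ (x + c * v)) + ∫ v in t0..t, φ (x + c * v) :=
      (intervalIntegral.integral_add_adjacent_intervals (hint 0 t0) (hint t0 t)).symm
    have h1 : 0 ≤ ∫ v in (0:ℝ)..t0, φ (x + c * v) :=
      intervalIntegral.integral_nonneg ht0nn (fun u _ => hφnonneg _)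
    have h2 : t - t0 ≤ ∫ v in t0..t, φ (x + c * v) := by
      have : (∫ v in t0..t, (1:ℝ)) ≤ ∫ v in t0..t, φ (x + c * v) := by
        apply intervalIntegral.integral_mono_on ht intervalIntegrable_const (hint t0 t)
        intro u hu
        have hub : b ≤ x + c * u := by
          have h3 : (b - x) / c ≤ u := le_trans (le_max_right _ _) hu.1
          have := (div_le_iff₀ hc).mp h3
          linarith
        exact le_trans hb (hφmono hub)
      simpa using this
    linarith
  -- split the integral
  rw [S, ← Ioc_union_Ioi_eq_Ioi ht0nn,
    lintegral_union measurableSet_Ioi Ioc_disjoint_Ioi_same]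
  have hA : (∫⁻ t in Ioc (0:ℝ) t0, ENNReal.ofReal (G1 c φ x t * G2 α y t)) ≤
      ENNReal.ofReal t0 := by
    calc (∫⁻ t in Ioc (0:ℝ) t0, ENNReal.ofReal (G1 c φ x t * G2 α y t))
        ≤ ∫⁻ _ in Ioc (0:ℝ) t0, 1 := by
          apply setLIntegral_mono' measurableSet_Ioc
          intro t ht
          have hG1 : G1 c φ x t ≤ 1 := by
            rw [G1, Real.exp_le_one_iff, neg_nonpos]
            exact intervalIntegral.integral_nonneg ht.1.le (fun u _ => hφnonneg _)
          have := mul_le_one₀ hG1 (hG2pos t).le (hG2le t ht.1.le)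
          simpa using ENNReal.ofReal_le_ofReal this
      _ = ENNReal.ofReal t0 := by
          rw [setLIntegral_one, Real.volume_Ioc, sub_zero]
  have hB : (∫⁻ t in Ioi t0, ENNReal.ofReal (G1 c φ x t * G2 α y t)) ≤ 1 := by
    have hintexp : IntegrableOn (fun t : ℝ => Real.exp (t0 - t)) (Ioi t0) := by
      have heq : (fun t : ℝ => Real.exp (t0 - t)) =
          fun t : ℝ => Real.exp t0 * Real.exp (-1 * t) := by
        funext t; rw [← Real.exp_add]; ring_nf
      rw [heq]
      exact (exp_neg_integrableOn_Ioi t0 one_pos).const_mul _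
    calc (∫⁻ t in Ioi t0, ENNReal.ofReal (G1 c φ x t * G2 α y t))
        ≤ ∫⁻ t in Ioi t0, ENNReal.ofReal (Real.exp (t0 - t)) := by
          apply setLIntegral_mono' measurableSet_Ioi
          intro t ht
          apply ENNReal.ofReal_le_ofReal
          calc G1 c φ x t * G2 α y t ≤ G1 c φ x t * 1 := by
                have := hG2le t (le_trans ht0nn (le_of_lt ht))
                nlinarith [hG1pos t]
            _ = G1 c φ x t := mul_one _
            _ ≤ Real.exp (t0 - t) := hG1le t (le_of_lt ht)
      _ = ENNReal.ofReal (∫ t in Ioi t0, Real.exp (t0 - t)) := by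
          rw [← ofReal_integral_eq_lintegral_ofReal hintexp]
          exact Filter.Eventually.of_forall (fun t => (Real.exp_pos _).le)
      _ = 1 := by
          have : (∫ t in Ioi t0, Real.exp (t0 - t)) =
              Real.exp t0 * ∫ t in Ioi t0, Real.exp (-t) := by
            rw [← integral_const_mul]
            congr 1
            ext t
            rw [← Real.exp_add]
            ring_nf
          rw [this, integral_exp_neg_Ioi, ← Real.exp_add, add_neg_cancel,
            Real.exp_zero, ENNReal.ofReal_one]
  calc (∫⁻ t in Ioc (0:ℝ) t0, ENNReal.ofReal (G1 c φ x t * G2 α y t)) +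
        ∫⁻ t in Ioi t0, ENNReal.ofReal (G1 c φ x t * G2 α y t)
      ≤ ENNReal.ofReal t0 + 1 := add_le_add hA hB
    _ = ENNReal.ofReal (t0 + 1) := by
        rw [ENNReal.ofReal_add ht0nn zero_le_one, ENNReal.ofReal_one]

/-- There is a constant `C > 0` with `S(x,y) ≤ C(|x|+1)` for all `x ≤ 0` and `y ≥ 0`;
consequently, for every `x1 ∈ ℝ`, `sup_{x > x1, y ≥ 0} S(x,y) < ∞`. -/
theorem expectation_linear_bound_nonpos_x
    (c α : ℝ) (hc : 0 < c) (hα : 0 < α)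
    (φ : ℝ → ℝ) (hφmono : Monotone φ) (hφnonneg : ∀ x, 0 ≤ φ x)
    (hφbot : Tendsto φ atBot (nhds 0)) (hφtop : Tendsto φ atTop atTop) :
    (∃ C : ℝ, 0 < C ∧ ∀ x y : ℝ, x ≤ 0 → 0 ≤ y →
      S c α φ x y ≤ ENNReal.ofReal (C * (|x| + 1))) ∧
    ∀ x1 : ℝ, (⨆ x : Set.Ioi x1, ⨆ y : Set.Ici (0:ℝ), S c α φ x y) < ⊤ := by
  obtain ⟨b, hb⟩ := (hφtop.eventually_ge_atTop 1).exists
  constructor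
  · refine ⟨max |b| 1 / c + 1, by positivity, fun x y hx hy => ?_⟩
    refine le_trans (S_key_bound c α hc hα φ hφmono hφnonneg b hb x y hy) ?_
    apply ENNReal.ofReal_le_ofReal
    have habs : |x| = -x := abs_of_nonpos hx
    have h1 : max 0 ((b - x) / c) ≤ max |b| 1 / c * (|x| + 1) := by
      apply max_le
      · positivity
      · rw [div_le_iff₀ hc]
        have hb1 : b ≤ max |b| 1 := le_trans (le_abs_self b) (le_max_left _ _)
        have h2 : (1:ℝ) ≤ max |b| 1 := le_max_right _ _
        have hcc : max |b| 1 / c * (|x| + 1) * c = max |b| 1 * (|x| + 1) := by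
          field_simp
        rw [hcc, habs]
        nlinarith
    have h3 : (0:ℝ) ≤ |x| := abs_nonneg x
    nlinarith [div_nonneg (le_trans zero_le_one (le_max_right |b| 1)) hc.le]
  · intro x1
    have hM : ∀ x y : ℝ, x1 < x → 0 ≤ y →
        S c α φ x y ≤ ENNReal.ofReal (max 0 ((b - min x1 0) / c) + 1) := by
      intro x y hx hy
      refine le_trans (S_key_bound c α hc hα φ hφmono hφnonneg b hb x y hy) ?_
      apply ENNReal.ofReal_le_ofReal
      have : (b - x) / c ≤ (b - min x1 0) / c := by
        have hxm : b - x ≤ b - min x1 0 := by linarith [min_le_left x1 (0:ℝ)]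
        gcongr
      gcongr
    exact lt_of_le_of_lt
      (iSup_le fun ⟨x, hx⟩ => iSup_le fun ⟨y, hy⟩ => hM x y hx hy)
      ENNReal.ofReal_lt_top
end
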